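/- arXiv:1610.04259 — 4 statements merged into one kernel-verified Lean document; each statement's English description precedes it below -/
import Mathlib

section
/- For n ≥ 2, the tree T_n has exactly n-1 vertices, of which ⌊n/2⌋ are skew-symmetric and ⌊(n-1)/2⌋ are symmetric. -/
open Finset


open Finset

/-- The vector `w(n)` (as a function of the index `i`): for odd `n`,
`w(n)_i = (n-1)/2` for even `i` and `-(n+1)/2` for odd `i` (as in Table 1 of the paper); `w(2) = (1,-1)`;
`w(4) = (1,-1,-1,1)`; for even `n = 2m > 4`, `w(n)_i = w(m)_{i mod m}`. -/
def w (n i : ℕ) : ℤ :=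
  if h2 : n < 2 then 0
  else if n = 2 then (if i = 0 then 1 else -1)
  else if n = 4 then (if i = 0 ∨ i = 3 then 1 else -1)
  else if n % 2 = 1 then (if i % 2 = 0 then ((n : ℤ) - 1) / 2 else -(((n : ℤ) + 1) / 2))
  else w (n / 2) (i % (n / 2))
termination_by n
decreasing_by omega

/-- Indices where `u` is positive. -/
def posIdx {n : ℕ} (u : Fin n → ℤ) : Finset (Fin n) :=
  Finset.univ.filter (fun i => 0 < u i)

/-- Indices where `u` is negative. -/
def negIdx {n : ℕ} (u : Fin n → ℤ) : Finset (Fin n) :=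
  Finset.univ.filter (fun i => u i < 0)

/-- The left child of a vertex labeled `u`: supported on the positive support
of `u`, with the `r`-th (in increasing index order) nonzero entry equal to
`w(a')_r` where `a'` is the size of the positive support. -/
def leftChild {n : ℕ} (u : Fin n → ℤ) : Fin n → ℤ := fun i =>
  if 0 < u i then w (posIdx u).card ((posIdx u).filter (fun j => j < i)).card else 0

/-- The right child of a vertex labeled `u`: supported on the negative support
of `u`, with the `r`-th nonzero entry equal to `w(a'')_r` where `a''` is the
size of the negative support. -/
def rightChild {n : ℕ} (u : Fin n → ℤ) : Fin n → ℤ := fun i =>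
  if u i < 0 then w (negIdx u).card ((negIdx u).filter (fun j => j < i)).card else 0

/-- Rooted binary trees with vertex labels in `α`. -/
inductive BT (α : Type) : Type where
  | node (label : α) (l r : Option (BT α)) : BT α

/-- Build the labeled tree below the vertex labeled `u` (with enough fuel this
is the tree described in the paper: a left child exists iff the positive
support has size at least `2`, a right child iff the negative support does). -/
def build (n : ℕ) : ℕ → (Fin n → ℤ) → BT (Fin n → ℤ)
  | 0, u => .node u none none
  | f + 1, u =>
    .node u
      (if 2 ≤ (posIdx u).card then some (build n f (leftChild u)) else none)
      (if 2 ≤ (negIdx u).card then some (build n f (rightChild u)) else none)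

/-- The tree `T_n`, rooted at `w(n)`. (Fuel `n` suffices since the number of
nonzero entries strictly decreases from parent to child.) -/
def T (n : ℕ) : BT (Fin n → ℤ) := build n n (fun i => w n i)

/-- The list of vertex labels of a tree in depth-first (preorder) order. -/
def labels {α : Type} : BT α → List α
  | .node a none none => [a]
  | .node a (some l) none => a :: labels l
  | .node a none (some r) => a :: labels r
  | .node a (some l) (some r) => a :: (labels l ++ labels r)

/-- A vertex label is skew-symmetric if its nonzero entries form the vector
`w(2) = (1,-1)`. -/
def IsSkew {n : ℕ} (u : Fin n → ℤ) : Prop :=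
  ∃ i j : Fin n, i < j ∧ u i = 1 ∧ u j = -1 ∧ ∀ k, k ≠ i → k ≠ j → u k = 0

instance {n : ℕ} (u : Fin n → ℤ) : Decidable (IsSkew u) := by
  unfold IsSkew; infer_instance

lemma w_two (i : ℕ) : w 2 i = if i = 0 then 1 else -1 := by
  rw [w]; norm_num

lemma w_four (i : ℕ) : w 4 i = if i = 0 ∨ i = 3 then 1 else -1 := by
  rw [w]; norm_num

lemma w_odd (a i : ℕ) (h : a % 2 = 1) (h3 : 3 ≤ a) :
    w a i = if i % 2 = 0 then ((a : ℤ) - 1) / 2 else -(((a : ℤ) + 1) / 2) := by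
  rw [w]
  have h1 : ¬ a < 2 := by omega
  have h2 : a ≠ 2 := by omega
  have h4 : a ≠ 4 := by omega
  simp [h1, h2, h4, h]

lemma w_even (a i : ℕ) (h : a % 2 = 0) (h6 : 6 ≤ a) :
    w a i = w (a / 2) (i % (a / 2)) := by
  rw [w]
  have h1 : ¬ a < 2 := by omega
  have h2 : a ≠ 2 := by omega
  have h4 : a ≠ 4 := by omega
  have h5 : a % 2 ≠ 1 := by omega
  simp [h1, h2, h4, h5]

lemma w_odd_pos (a i : ℕ) (h : a % 2 = 1) (h3 : 3 ≤ a) (hi : i % 2 = 0) :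
    0 < w a i := by
  rw [w_odd a i h h3, if_pos hi]
  have h2 : (3:ℤ) ≤ a := by exact_mod_cast h3
  have : (1:ℤ) ≤ ((a:ℤ) - 1) / 2 := by
    rw [Int.le_ediv_iff_mul_le (by norm_num)]; omega
  omega

lemma w_odd_neg (a i : ℕ) (h : a % 2 = 1) (h3 : 3 ≤ a) (hi : i % 2 ≠ 0) :
    w a i < 0 := by
  rw [w_odd a i h h3, if_neg hi]
  have h2 : (3:ℤ) ≤ a := by exact_mod_cast h3
  have : (1:ℤ) ≤ ((a:ℤ) + 1) / 2 := by
    rw [Int.le_ediv_iff_mul_le (by norm_num)]; omega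
  omega

lemma w_ne_zero : ∀ a, 2 ≤ a → ∀ i, w a i ≠ 0 := by
  intro a
  induction a using Nat.strong_induction_on with
  | _ a ih =>
    intro ha i
    rcases eq_or_ne a 2 with rfl | h2
    · rw [w_two]; split <;> omega
    rcases eq_or_ne a 4 with rfl | h4
    · rw [w_four]; split <;> omega
    rcases Nat.eq_zero_or_pos (a % 2) with he | ho
    · have h6 : 6 ≤ a := by omega
      rw [w_even a i (by omega) h6]
      exact ih (a / 2) (by omega) (by omega) _
    · have h3 : 3 ≤ a := by omega
      rcases Nat.eq_zero_or_pos (i % 2) with hi | hi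
      · exact ne_of_gt (w_odd_pos a i (by omega) h3 hi)
      · exact ne_of_lt (w_odd_neg a i (by omega) h3 (by omega))

lemma card_fin_filter (a : ℕ) (p : ℕ → Prop) [DecidablePred p] :
    (univ.filter fun r : Fin a => p r.val).card = ((range a).filter p).card := by
  rw [Finset.card_filter, Finset.card_filter]
  exact Fin.sum_univ_eq_sum_range (fun i => if p i then 1 else 0) a

def Pw (a : ℕ) : ℕ := ((range a).filter fun r => 0 < w a r).card

def Qw (a : ℕ) : ℕ := ((range a).filter fun r => w a r < 0).card

lemma Pw_add_Qw (a : ℕ) (ha : 2 ≤ a) : Pw a + Qw a = a := by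
  have : ((range a).filter fun r => w a r < 0) =
      ((range a).filter fun r => ¬ 0 < w a r) := by
    apply Finset.filter_congr
    intro x hx
    have := w_ne_zero a ha x
    constructor <;> intro h' <;> simp_all <;> omega
  rw [Pw, Qw, this, Finset.card_filter_add_card_filter_not, card_range]

lemma card_evens (a : ℕ) : ((range a).filter fun r => r % 2 = 0).card = (a + 1) / 2 := by
  induction a with
  | zero => simp
  | succ a ih =>
    rw [Finset.range_add_one, Finset.filter_insert]
    rcases Nat.eq_zero_or_pos (a % 2) with h | h
    · rw [if_pos h, Finset.card_insert_of_notMem (by simp), ih]; omega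
    · rw [if_neg (by omega), ih]; omega

lemma Pw_two : Pw 2 = 1 := by
  have h0 : w 2 0 = 1 := by rw [w_two]; norm_num
  have h1 : w 2 1 = -1 := by rw [w_two]; norm_num
  rw [Pw, show range 2 = {0, 1} by decide]
  rw [Finset.filter_insert, Finset.filter_singleton]
  norm_num [h0, h1]

lemma Qw_two : Qw 2 = 1 := by
  have := Pw_add_Qw 2 (by norm_num)
  rw [Pw_two] at this; omega

lemma Pw_four : Pw 4 = 2 := by
  have h0 : w 4 0 = 1 := by rw [w_four]; norm_num
  have h1 : w 4 1 = -1 := by rw [w_four]; norm_num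
  have h2 : w 4 2 = -1 := by rw [w_four]; norm_num
  have h3 : w 4 3 = 1 := by rw [w_four]; norm_num
  rw [Pw, show range 4 = {0, 1, 2, 3} by decide]
  rw [Finset.filter_insert, Finset.filter_insert, Finset.filter_insert,
    Finset.filter_singleton]
  norm_num [h0, h1, h2, h3]

lemma Qw_four : Qw 4 = 2 := by
  have := Pw_add_Qw 4 (by norm_num)
  rw [Pw_four] at this; omega

lemma Pw_odd (a : ℕ) (h : a % 2 = 1) (h3 : 3 ≤ a) : Pw a = (a + 1) / 2 := by
  rw [Pw, ← card_evens a]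
  congr 1
  apply Finset.filter_congr
  intro x hx
  constructor
  · intro h'
    by_contra hx2
    have := w_odd_neg a x h h3 (by simpa using hx2)
    omega
  · intro h'; simpa using w_odd_pos a x h h3 (by simpa using h')

lemma Qw_odd (a : ℕ) (h : a % 2 = 1) (h3 : 3 ≤ a) : Qw a = (a - 1) / 2 := by
  have := Pw_add_Qw a (by omega)
  have := Pw_odd a h h3
  omega

lemma Pw_three : Pw 3 = 2 := by
  rw [Pw_odd 3 (by norm_num) (by norm_num)]

lemma Qw_three : Qw 3 = 1 := by
  rw [Qw_odd 3 (by norm_num) (by norm_num)]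

lemma card_double (m : ℕ) (hm : 1 ≤ m) (p : ℕ → Prop) [DecidablePred p] :
    ((range (2 * m)).filter fun r => p (r % m)).card = 2 * ((range m).filter p).card := by
  rw [Finset.card_filter, Finset.card_filter]
  have split : (∑ r ∈ range (2*m), if p (r % m) then (1:ℕ) else 0)
      = (∑ r ∈ range m, if p (r % m) then (1:ℕ) else 0)
        + ∑ r ∈ Finset.Ico m (2*m), if p (r % m) then (1:ℕ) else 0 := by
    simp only [Finset.range_eq_Ico]
    exact (Finset.sum_Ico_consecutive _ (Nat.zero_le m) (by omega : m ≤ 2*m)).symm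
  rw [split, Finset.sum_Ico_eq_sum_range]
  have e1 : ∀ r ∈ Finset.range m, (if p (r % m) then (1:ℕ) else 0) = if p r then 1 else 0 := by
    intro r hr
    simp only [Finset.mem_range] at hr
    rw [Nat.mod_eq_of_lt hr]
  have e2 : ∀ r ∈ Finset.range (2*m - m), (if p ((m + r) % m) then (1:ℕ) else 0) = if p r then 1 else 0 := by
    intro r hr
    simp only [Finset.mem_range] at hr
    rw [Nat.add_mod_left, Nat.mod_eq_of_lt (by omega)]
  rw [Finset.sum_congr rfl e1, Finset.sum_congr rfl e2, show 2*m - m = m by omega]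
  ring

lemma Pw_even (a : ℕ) (h : a % 2 = 0) (h6 : 6 ≤ a) : Pw a = 2 * Pw (a / 2) := by
  have h2 : a = 2 * (a / 2) := by omega
  rw [Pw]
  have e : ((range a).filter fun r => 0 < w a r)
      = ((range (2 * (a/2))).filter fun r => 0 < w (a/2) (r % (a/2))) := by
    rw [← h2]
    apply Finset.filter_congr
    intro x hx
    rw [w_even a x h h6]
  rw [e, card_double (a/2) (by omega) (fun s => 0 < w (a/2) s)]
  rfl

lemma Qw_even (a : ℕ) (h : a % 2 = 0) (h6 : 6 ≤ a) : Qw a = 2 * Qw (a / 2) := by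
  have h2 : a = 2 * (a / 2) := by omega
  rw [Qw]
  have e : ((range a).filter fun r => w a r < 0)
      = ((range (2 * (a/2))).filter fun r => w (a/2) (r % (a/2)) < 0) := by
    rw [← h2]
    apply Finset.filter_congr
    intro x hx
    rw [w_even a x h h6]
  rw [e, card_double (a/2) (by omega) (fun s => w (a/2) s < 0)]
  rfl

lemma Pw_pos : ∀ a, 2 ≤ a → 1 ≤ Pw a ∧ 1 ≤ Qw a := by
  intro a
  induction a using Nat.strong_induction_on with
  | _ a ih =>
    intro ha
    rcases eq_or_ne a 2 with rfl | h2
    · rw [Pw_two, Qw_two]; omega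
    rcases eq_or_ne a 4 with rfl | h4
    · rw [Pw_four, Qw_four]; omega
    rcases Nat.eq_zero_or_pos (a % 2) with he | ho
    · have h6 : 6 ≤ a := by omega
      rw [Pw_even a (by omega) h6, Qw_even a (by omega) h6]
      have := ih (a / 2) (by omega) (by omega)
      omega
    · have h3 : 3 ≤ a := by omega
      rw [Pw_odd a (by omega) h3, Qw_odd a (by omega) h3]
      omega

lemma Pw_even_parity (a : ℕ) (h : a % 2 = 0) (h4 : 4 ≤ a) :
    Pw a % 2 = 0 ∧ Qw a % 2 = 0 := by
  rcases eq_or_ne a 4 with rfl | hne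
  · rw [Pw_four, Qw_four]; omega
  · rw [Pw_even a h (by omega), Qw_even a h (by omega)]; omega

lemma card_filter_lt_fin {P : ℕ} (t : Fin P) :
    (univ.filter (fun x : Fin P => x < t)).card = t := by
  rw [show univ.filter (fun x : Fin P => x < t) = Finset.Iio t by ext; simp, Fin.card_Iio]

lemma rank_orderIso {α : Type*} [LinearOrder α] (s : Finset α) {P : ℕ} (hs : s.card = P)
    (t : Fin P) :
    (s.filter (· < (s.orderIsoOfFin hs t : α))).card = t := by
  have him : s.filter (· < (s.orderIsoOfFin hs t : α))
      = (univ.filter (fun x : Fin P => x < t)).image (fun x => (s.orderIsoOfFin hs x : α)) := by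
    ext x
    simp only [Finset.mem_filter, Finset.mem_image, Finset.mem_univ, true_and]
    constructor
    · rintro ⟨hx, hlt⟩
      obtain ⟨r, hr⟩ := (s.orderIsoOfFin hs).surjective ⟨x, hx⟩
      refine ⟨r, ?_, by rw [hr]⟩
      have : (s.orderIsoOfFin hs r : α) < (s.orderIsoOfFin hs t : α) := by
        rw [hr]; exact hlt
      exact (s.orderIsoOfFin hs).lt_iff_lt.mp (Subtype.coe_lt_coe.mp this)
    · rintro ⟨r, hr, rfl⟩
      refine ⟨(s.orderIsoOfFin hs r).2, ?_⟩
      exact Subtype.coe_lt_coe.mpr ((s.orderIsoOfFin hs).lt_iff_lt.mpr hr)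
  rw [him, Finset.card_image_of_injective _ ?_, card_filter_lt_fin]
  intro x y hxy
  exact (s.orderIsoOfFin hs).injective (Subtype.coe_injective hxy)

def Emb {n : ℕ} (a : ℕ) (u : Fin n → ℤ) : Prop :=
  ∃ e : Fin a → Fin n, StrictMono e ∧ (∀ r, u (e r) = w a r.val) ∧
    ∀ i, u i ≠ 0 → ∃ r, e r = i

lemma emb_left {n a : ℕ} (u : Fin n → ℤ) (ha : 2 ≤ a) (h : Emb a u) :
    (posIdx u).card = Pw a ∧ Emb (Pw a) (leftChild u) := by
  obtain ⟨e, he, hw, hsurj⟩ := h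
  set S : Finset (Fin a) := univ.filter (fun r => 0 < w a r.val) with hSdef
  have hims : posIdx u = S.image e := by
    ext i
    simp only [posIdx, hSdef, Finset.mem_filter, Finset.mem_univ, true_and,
      Finset.mem_image]
    constructor
    · intro hi
      obtain ⟨r, rfl⟩ := hsurj i hi.ne'
      exact ⟨r, by rw [← hw r]; exact hi, rfl⟩
    · rintro ⟨r, hr, rfl⟩
      rw [hw]; exact hr
  have hSc : S.card = Pw a := by
    rw [hSdef]
    exact card_fin_filter a (fun x => 0 < w a x)
  have hcard : (posIdx u).card = Pw a := by
    rw [hims, Finset.card_image_of_injective _ he.injective, hSc]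
  refine ⟨hcard, ?_⟩
  set m := S.orderIsoOfFin hSc with hm
  refine ⟨fun t => e (m t), ?_, ?_, ?_⟩
  · intro t t' ht
    exact he (Subtype.coe_lt_coe.mpr (m.lt_iff_lt.mpr ht))
  · intro t
    have hmem : (m t : Fin a) ∈ S := (m t).2
    have hpos : 0 < u (e (m t)) := by
      rw [hw]
      exact (Finset.mem_filter.mp hmem).2
    have hrank : ((posIdx u).filter (fun j => j < e (m t))).card = t := by
      have him2 : (posIdx u).filter (fun j => j < e (m t))
          = (S.filter (· < (m t : Fin a))).image e := by
        rw [hims]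
        ext x
        simp only [Finset.mem_filter, Finset.mem_image]
        constructor
        · rintro ⟨⟨r, hr, rfl⟩, hlt⟩
          exact ⟨r, ⟨hr, he.lt_iff_lt.mp hlt⟩, rfl⟩
        · rintro ⟨r, ⟨hr, hlt⟩, rfl⟩
          exact ⟨⟨r, hr, rfl⟩, he hlt⟩
      rw [him2, Finset.card_image_of_injective _ he.injective]
      exact rank_orderIso S hSc t
    show leftChild u (e (m t)) = w (Pw a) t.val
    simp only [leftChild]
    rw [if_pos hpos, hcard, hrank]
  · intro i hi
    have hpos : 0 < u i := by
      by_contra hc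
      simp only [leftChild] at hi
      rw [if_neg hc] at hi
      exact hi rfl
    have : i ∈ posIdx u := by simp [posIdx, hpos]
    rw [hims] at this
    obtain ⟨r, hr, rfl⟩ := Finset.mem_image.mp this
    obtain ⟨t, ht⟩ := m.surjective ⟨r, hr⟩
    exact ⟨t, congrArg e (congrArg Subtype.val ht)⟩

lemma emb_right {n a : ℕ} (u : Fin n → ℤ) (ha : 2 ≤ a) (h : Emb a u) :
    (negIdx u).card = Qw a ∧ Emb (Qw a) (rightChild u) := by
  obtain ⟨e, he, hw, hsurj⟩ := h
  set S : Finset (Fin a) := univ.filter (fun r => w a r.val < 0) with hSdef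
  have hims : negIdx u = S.image e := by
    ext i
    simp only [negIdx, hSdef, Finset.mem_filter, Finset.mem_univ, true_and,
      Finset.mem_image]
    constructor
    · intro hi
      obtain ⟨r, rfl⟩ := hsurj i hi.ne
      exact ⟨r, by rw [← hw r]; exact hi, rfl⟩
    · rintro ⟨r, hr, rfl⟩
      rw [hw]; exact hr
  have hSc : S.card = Qw a := by
    rw [hSdef]
    exact card_fin_filter a (fun x => w a x < 0)
  have hcard : (negIdx u).card = Qw a := by
    rw [hims, Finset.card_image_of_injective _ he.injective, hSc]
  refine ⟨hcard, ?_⟩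
  set m := S.orderIsoOfFin hSc with hm
  refine ⟨fun t => e (m t), ?_, ?_, ?_⟩
  · intro t t' ht
    exact he (Subtype.coe_lt_coe.mpr (m.lt_iff_lt.mpr ht))
  · intro t
    have hmem : (m t : Fin a) ∈ S := (m t).2
    have hpos : u (e (m t)) < 0 := by
      rw [hw]
      exact (Finset.mem_filter.mp hmem).2
    have hrank : ((negIdx u).filter (fun j => j < e (m t))).card = t := by
      have him2 : (negIdx u).filter (fun j => j < e (m t))
          = (S.filter (· < (m t : Fin a))).image e := by
        rw [hims]
        ext x
        simp only [Finset.mem_filter, Finset.mem_image]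
        constructor
        · rintro ⟨⟨r, hr, rfl⟩, hlt⟩
          exact ⟨r, ⟨hr, he.lt_iff_lt.mp hlt⟩, rfl⟩
        · rintro ⟨r, ⟨hr, hlt⟩, rfl⟩
          exact ⟨⟨r, hr, rfl⟩, he hlt⟩
      rw [him2, Finset.card_image_of_injective _ he.injective]
      exact rank_orderIso S hSc t
    show rightChild u (e (m t)) = w (Qw a) t.val
    simp only [rightChild]
    rw [if_pos hpos, hcard, hrank]
  · intro i hi
    have hpos : u i < 0 := by
      by_contra hc
      simp only [rightChild] at hi
      rw [if_neg hc] at hi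
      exact hi rfl
    have : i ∈ negIdx u := by simp [negIdx, hpos]
    rw [hims] at this
    obtain ⟨r, hr, rfl⟩ := Finset.mem_image.mp this
    obtain ⟨t, ht⟩ := m.surjective ⟨r, hr⟩
    exact ⟨t, congrArg e (congrArg Subtype.val ht)⟩

lemma emb_two_skew {n : ℕ} (u : Fin n → ℤ) (h : Emb 2 u) : IsSkew u := by
  obtain ⟨e, he, hw, hsurj⟩ := h
  refine ⟨e 0, e 1, he (show (0:Fin 2) < 1 by decide), ?_, ?_, ?_⟩
  · have h0 := hw 0
    rw [w_two] at h0
    simpa using h0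
  · have h1 := hw 1
    rw [w_two] at h1
    simpa using h1
  · intro k hk0 hk1
    by_contra hk
    obtain ⟨r, rfl⟩ := hsurj k hk
    fin_cases r
    · exact hk0 rfl
    · exact hk1 rfl

lemma emb_not_skew {n a : ℕ} (u : Fin n → ℤ) (h3 : 3 ≤ a) (h : Emb a u) : ¬ IsSkew u := by
  obtain ⟨e, he, hw, _⟩ := h
  rintro ⟨i, j, hij, hi, hj, hz⟩
  have hinj := he.injective
  have mem : ∀ r : Fin a, e r = i ∨ e r = j := by
    intro r
    by_contra hc
    push_neg at hc
    have h0 : u (e r) = 0 := hz _ hc.1 hc.2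
    rw [hw] at h0
    exact w_ne_zero a (by omega) r h0
  have d01 : e ⟨0, by omega⟩ ≠ e ⟨1, by omega⟩ := fun hh => by
    have := hinj hh; simp [Fin.ext_iff] at this
  have d02 : e ⟨0, by omega⟩ ≠ e ⟨2, by omega⟩ := fun hh => by
    have := hinj hh; simp [Fin.ext_iff] at this
  have d12 : e ⟨1, by omega⟩ ≠ e ⟨2, by omega⟩ := fun hh => by
    have := hinj hh; simp [Fin.ext_iff] at this
  rcases mem ⟨0, by omega⟩ with h0 | h0 <;>
    rcases mem ⟨1, by omega⟩ with h1 | h1 <;>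
      rcases mem ⟨2, by omega⟩ with h2 | h2 <;>
        first
          | exact d01 (h0.trans h1.symm)
          | exact d02 (h0.trans h2.symm)
          | exact d12 (h1.trans h2.symm)

lemma main_aux : ∀ a, 2 ≤ a → ∀ (n f : ℕ) (u : Fin n → ℤ), a ≤ f + 1 → Emb a u →
    (labels (build n f u)).length = a - 1 ∧
    (labels (build n f u)).countP (fun v => decide (IsSkew v)) = a / 2 ∧
    (labels (build n f u)).countP (fun v => decide (¬ IsSkew v)) = (a - 1) / 2 := by
  intro a
  induction a using Nat.strong_induction_on with
  | _ a ih =>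
    intro ha n f u hf hemb
    obtain ⟨f, rfl⟩ : ∃ f', f = f' + 1 := ⟨f - 1, by omega⟩
    obtain ⟨hPc, hPemb⟩ := emb_left u ha hemb
    obtain ⟨hQc, hQemb⟩ := emb_right u ha hemb
    have hPQ := Pw_add_Qw a ha
    have hpos := Pw_pos a ha
    rcases eq_or_ne a 2 with rfl | ha2
    · rw [Pw_two] at hPc
      rw [Qw_two] at hQc
      have hsk := emb_two_skew u hemb
      simp only [build, hPc, hQc]
      rw [if_neg (by norm_num), if_neg (by norm_num)]
      simp [labels, List.countP_cons, hsk]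
    rcases eq_or_ne a 3 with rfl | ha3
    · rw [Pw_three] at hPc hPemb
      rw [Qw_three] at hQc
      have hns := emb_not_skew u (le_refl 3) hemb
      obtain ⟨hl, hs, hn⟩ := ih 2 (by omega) (by omega) n f (leftChild u) (by omega) hPemb
      simp only [build, hPc, hQc]
      rw [if_pos (by norm_num), if_neg (by norm_num)]
      simp only [labels, List.length_cons, List.countP_cons, hl, hs, hn]
      simp [hns]
    · -- a ≥ 4
      have h4 : 4 ≤ a := by omega
      have hP2 : 2 ≤ Pw a ∧ 2 ≤ Qw a ∧ (a % 2 = 0 → Pw a % 2 = 0) := by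
        rcases Nat.eq_zero_or_pos (a % 2) with hev | hod
        · rcases eq_or_ne a 4 with rfl | ha4
          · rw [Pw_four, Qw_four]; omega
          · have := Pw_even_parity a hev h4
            have := Pw_pos (a / 2) (by omega)
            rw [Pw_even a hev (by omega), Qw_even a hev (by omega)]
            omega
        · rw [Pw_odd a (by omega) (by omega), Qw_odd a (by omega) (by omega)]
          omega
      obtain ⟨hP2, hQ2, hpar⟩ := hP2
      have hns := emb_not_skew u (by omega) hemb
      obtain ⟨hl1, hs1, hn1⟩ := ih (Pw a) (by omega) (by omega) n f (leftChild u) (by omega) hPemb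
      obtain ⟨hl2, hs2, hn2⟩ := ih (Qw a) (by omega) (by omega) n f (rightChild u) (by omega) hQemb
      simp only [build, hPc, hQc]
      rw [if_pos (by omega), if_pos (by omega)]
      simp only [labels, List.length_cons, List.length_append,
        List.countP_cons, List.countP_append, hl1, hs1, hn1, hl2, hs2, hn2]
      have hd : decide (IsSkew u) = false := decide_eq_false hns
      have hd2 : decide (¬ IsSkew u) = true := decide_eq_true hns
      simp only [hd, hd2, Bool.false_eq_true, if_false, if_true]
      refine ⟨by omega, by omega, by omega⟩

/-- `T_n` has `n - 1` vertices, of which `⌊n/2⌋` are skew-symmetric and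
`⌊(n-1)/2⌋` are symmetric. -/
theorem stmt8 (n : ℕ) (hn : 2 ≤ n) :
    (labels (T n)).length = n - 1 ∧
    (labels (T n)).countP (fun u => decide (IsSkew u)) = n / 2 ∧
    (labels (T n)).countP (fun u => decide (¬ IsSkew u)) = (n - 1) / 2 := by
  have hemb : Emb n (fun i : Fin n => w n i) :=
    ⟨id, strictMono_id, fun r => rfl, fun i _ => ⟨i, rfl⟩⟩
  exact main_aux n hn n n _ (by omega) hemb
end

section
/- For every vertex label u of T_n, the positive entries of u are all equal and the negative entries of u are all equal (each such value occurring at least once). -/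
open Finset


open Finset

/-! Every label of `T n` is, up to zeros, a list of the values of some `w m` with `m ≥ 2`:
the root is `w n`, and a child re-lists `w a'` in increasing order along a support of size
`a' ≥ 2`. So it suffices that each such `w m` takes exactly one positive and one negative value.
This is immediate for `w 2`, `w 4` and odd `m`, and holds for even `m > 4` because `w m` repeats
`w (m / 2)`. Sign-constancy depends only on the nonzero values taken, so each step compares
ranges. -/

def IsSignConstant {ι : Type*} (u : ι → ℤ) : Prop :=
  (∃ p : ℤ, 0 < p ∧ (∃ i, u i = p) ∧ ∀ i, 0 < u i → u i = p) ∧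
  (∃ q : ℤ, q < 0 ∧ (∃ i, u i = q) ∧ ∀ i, u i < 0 → u i = q)

section IsSignConstant

variable {ι κ : Type*}

lemma isSignConstant_of_forall_eq_or_eq {u : ι → ℤ} {p q : ℤ} (hp : 0 < p) (hq : q < 0)
    {i j : ι} (hi : u i = p) (hj : u j = q) (h : ∀ k, u k = p ∨ u k = q) :
    IsSignConstant u :=
  ⟨⟨p, hp, ⟨i, hi⟩, fun k hk => (h k).resolve_right (by omega)⟩,
    ⟨q, hq, ⟨j, hj⟩, fun k hk => (h k).resolve_left (by omega)⟩⟩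

lemma IsSignConstant.of_range {u : ι → ℤ} {v : κ → ℤ} (hu : IsSignConstant u)
    (huv : ∀ x ≠ 0, x ∈ Set.range u ↔ x ∈ Set.range v) : IsSignConstant v := by
  obtain ⟨⟨p, hp, ⟨i, hi⟩, hpu⟩, ⟨q, hq, ⟨j, hj⟩, hqu⟩⟩ := hu
  have hpv : p ∈ Set.range v := (huv p hp.ne').1 ⟨i, hi⟩
  have hqv : q ∈ Set.range v := (huv q hq.ne).1 ⟨j, hj⟩
  refine ⟨⟨p, hp, hpv, fun k hk => ?_⟩, ⟨q, hq, hqv, fun k hk => ?_⟩⟩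
  · obtain ⟨l, hl⟩ := (huv (v k) hk.ne').2 ⟨k, rfl⟩
    rw [← hl, hpu l (hl ▸ hk)]
  · obtain ⟨l, hl⟩ := (huv (v k) hk.ne).2 ⟨k, rfl⟩
    rw [← hl, hqu l (hl ▸ hk)]

end IsSignConstant

lemma w_of_odd {n : ℕ} (hn : n % 2 = 1) (h1 : n ≠ 1) (i : ℕ) :
    w n i = if i % 2 = 0 then ((n : ℤ) - 1) / 2 else -(((n : ℤ) + 1) / 2) := by
  rw [w, dif_neg (by omega), if_neg (by omega), if_neg (by omega), if_pos hn]

lemma w_of_even {n : ℕ} (hn : n % 2 = 0) (h2 : n ≠ 2) (h4 : n ≠ 4) (h0 : n ≠ 0) (i : ℕ) :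
    w n i = w (n / 2) (i % (n / 2)) := by
  rw [w, dif_neg (by omega), if_neg h2, if_neg h4, if_neg (by omega)]

lemma isSignConstant_w {n : ℕ} (hn : 2 ≤ n) : IsSignConstant (fun i : Fin n => w n i) := by
  induction n using Nat.strong_induction_on with
  | _ n ih =>
    rcases Nat.even_or_odd' n with ⟨m, rfl | rfl⟩
    · by_cases hm : m = 1 ∨ m = 2
      · rcases hm with rfl | rfl
        · exact isSignConstant_of_forall_eq_or_eq (p := 1) (q := -1) one_pos (by norm_num)
            (i := 0) (j := 1) (by simp [w_two]) (by simp [w_two])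
            fun k => by simp [w_two]; tauto
        · exact isSignConstant_of_forall_eq_or_eq (p := 1) (q := -1) one_pos (by norm_num)
            (i := 0) (j := 1) (by simp [w_four]) (by simp [w_four])
            fun k => by simp [w_four]; tauto
      refine (ih m (by omega) (by omega)).of_range fun x _ => ?_
      simp only [w_of_even (n := 2 * m) (by omega) (by omega) (by omega) (by omega),
        Nat.mul_div_cancel_left m two_pos, Set.mem_range]
      constructor
      · rintro ⟨k, rfl⟩
        exact ⟨⟨k, by omega⟩, by simp [Nat.mod_eq_of_lt k.isLt]⟩
      · rintro ⟨k, rfl⟩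
        exact ⟨⟨k % m, Nat.mod_lt _ (by omega)⟩, rfl⟩
    · have hw := w_of_odd (n := 2 * m + 1) (by omega) (by omega)
      push_cast at hw
      refine isSignConstant_of_forall_eq_or_eq (p := m) (q := -(m + 1)) (by omega) (by omega)
        (i := ⟨0, by omega⟩) (j := ⟨1, by omega⟩) (by simp [hw]) (by simp [hw]; omega)
        fun k => ?_
      rw [hw]
      split_ifs <;> omega

namespace Finset

variable {α : Type*}

lemma card_filter_lt_lt_card [Preorder α] [DecidableLT α] {s : Finset α} {i : α}
    (hi : i ∈ s) :
    #{j ∈ s | j < i} < #s :=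
  card_lt_card <| filter_ssubset.2 ⟨i, hi, lt_irrefl i⟩

lemma strictMonoOn_card_filter_lt [Preorder α] [DecidableLT α] (s : Finset α) :
    StrictMonoOn (fun i => #{j ∈ s | j < i}) s := by
  intro i hi i' _ hii'
  refine card_lt_card <| (ssubset_iff_of_subset fun j hj => ?_).2 ⟨i, ?_, ?_⟩
  · simp only [mem_filter] at hj ⊢
    exact ⟨hj.1, hj.2.trans hii'⟩
  · exact mem_filter.2 ⟨hi, hii'⟩
  · simp

lemma exists_mem_card_filter_lt_eq [LinearOrder α] {s : Finset α} {k : ℕ} (hk : k < #s) :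
    ∃ i ∈ s, #{j ∈ s | j < i} = k :=
  surjOn_of_injOn_of_card_le (t := range #s) _
    (fun _ hi => mem_range.2 (card_filter_lt_lt_card hi))
    (strictMonoOn_card_filter_lt s).injOn (by simp) (mem_range.2 hk)

end Finset

lemma IsSignConstant.spread {α : Type*} [LinearOrder α] {s : Finset α} {g : ℕ → ℤ}
    (hg : IsSignConstant (fun k : Fin #s => g k)) :
    IsSignConstant (fun i => if i ∈ s then g #{j ∈ s | j < i} else 0) := by
  refine hg.of_range fun x hx => ⟨?_, ?_⟩
  · rintro ⟨k, rfl⟩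
    obtain ⟨i, hi, hik⟩ := exists_mem_card_filter_lt_eq k.isLt
    exact ⟨i, by simp only [if_pos hi, hik]⟩
  · rintro ⟨i, rfl⟩
    have hi : i ∈ s := by
      by_contra hi
      exact hx (if_neg hi)
    exact ⟨⟨_, card_filter_lt_lt_card hi⟩, (if_pos hi).symm⟩

lemma isSignConstant_leftChild {n : ℕ} {u : Fin n → ℤ} (h : 2 ≤ #(posIdx u)) :
    IsSignConstant (leftChild u) := by
  have hleft : leftChild u =
      fun i => if i ∈ posIdx u then w #(posIdx u) #{j ∈ posIdx u | j < i} else 0 := by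
    funext i
    simp only [leftChild, posIdx, mem_filter, mem_univ, true_and]
  rw [hleft]
  exact (isSignConstant_w h).spread

lemma isSignConstant_rightChild {n : ℕ} {u : Fin n → ℤ} (h : 2 ≤ #(negIdx u)) :
    IsSignConstant (rightChild u) := by
  have hright : rightChild u =
      fun i => if i ∈ negIdx u then w #(negIdx u) #{j ∈ negIdx u | j < i} else 0 := by
    funext i
    simp only [rightChild, negIdx, mem_filter, mem_univ, true_and]
  rw [hright]
  exact (isSignConstant_w h).spread

lemma mem_labels_node {α : Type} {a v : α} {l r : Option (BT α)} :
    v ∈ labels (.node a l r) ↔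
      v = a ∨ (∃ t ∈ l, v ∈ labels t) ∨ ∃ t ∈ r, v ∈ labels t := by
  cases l <;> cases r <;> simp [labels]

lemma forall_mem_labels_build {n : ℕ} {P : (Fin n → ℤ) → Prop}
    (hl : ∀ u, 2 ≤ #(posIdx u) → P (leftChild u))
    (hr : ∀ u, 2 ≤ #(negIdx u) → P (rightChild u)) :
    ∀ (f : ℕ) (u : Fin n → ℤ), P u → ∀ v ∈ labels (build n f u), P v
  | 0, u, hu, v, hv => by
    rw [build, labels, List.mem_singleton] at hv
    exact hv ▸ hu
  | f + 1, u, hu, v, hv => by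
    rw [build, mem_labels_node] at hv
    rcases hv with rfl | ⟨t, ht, hv⟩ | ⟨t, ht, hv⟩
    · exact hu
    · split_ifs at ht with h
      · cases Option.mem_some_iff.1 ht
        exact forall_mem_labels_build hl hr f _ (hl u h) v hv
      · cases ht
    · split_ifs at ht with h
      · cases Option.mem_some_iff.1 ht
        exact forall_mem_labels_build hl hr f _ (hr u h) v hv
      · cases ht

/-- For every vertex label `u` of `T_n`, the positive entries of `u` are all
equal and the negative entries of `u` are all equal, each value occurring at
least once. -/
theorem stmt10 (n : ℕ) (hn : 2 ≤ n) :
    ∀ u ∈ labels (T n),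
      (∃ p : ℤ, 0 < p ∧ (∃ i, u i = p) ∧ ∀ i, 0 < u i → u i = p) ∧
      (∃ q : ℤ, q < 0 ∧ (∃ i, u i = q) ∧ ∀ i, u i < 0 → u i = q) :=
  forall_mem_labels_build (fun _ h => isSignConstant_leftChild h)
    (fun _ h => isSignConstant_rightChild h) n _ (isSignConstant_w hn)
end

section
/- Let u, v ∈ ℝ^n each have entries summing to zero, and suppose u ≠ v as elements of U(n) (constructed from the tree T_n). Then the outer product matrix uv has both its main diagonal sum and its main anti-diagonal sum equal to zero: ∑_{i=1}^n (uv)_{ii} = 0 and ∑_{i=1}^n (uv)_{i,n+1-i} = 0. -/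
open Finset


open Finset

lemma wvals : ∀ n, 2 ≤ n → ∃ p q : ℤ, 0 < p ∧ q < 0 ∧ ∀ i, w n i = p ∨ w n i = q := by
  intro n
  induction n using Nat.strong_induction_on with
  | _ n ih =>
    intro hn
    by_cases h2 : n = 2
    · subst h2
      refine ⟨1, -1, one_pos, by norm_num, fun i => ?_⟩
      rw [w]; rcases eq_or_ne i 0 with h|h <;> simp [h]
    by_cases h4 : n = 4
    · subst h4
      refine ⟨1, -1, one_pos, by norm_num, fun i => ?_⟩
      rw [w]; norm_num; tauto
    by_cases hodd : n % 2 = 1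
    · refine ⟨((n:ℤ)-1)/2, -(((n:ℤ)+1)/2), by omega, by omega, fun i => ?_⟩
      rw [w]
      simp only [dif_neg (by omega : ¬ n < 2), if_neg h2, if_neg h4, if_pos hodd]
      split <;> simp
    · obtain ⟨p, q, hp, hq, h⟩ := ih (n/2) (by omega) (by omega)
      refine ⟨p, q, hp, hq, fun i => ?_⟩
      rw [w]
      simp only [dif_neg (by omega : ¬ n < 2), if_neg h2, if_neg h4, if_neg hodd]
      exact h _

lemma w2_0 : w 2 0 = 1 := by rw [w]; norm_num
lemma w2_1 : w 2 1 = -1 := by rw [w]; norm_num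

lemma wpal : ∀ n, n ≠ 2 → ∀ i, i < n → w n (n - 1 - i) = w n i := by
  intro n
  induction n using Nat.strong_induction_on with
  | _ n ih =>
    intro h2 i hi
    by_cases hlt : n < 2
    · conv_lhs => rw [w]
      conv_rhs => rw [w]
      simp [hlt]
    by_cases h4 : n = 4
    · subst h4
      conv_lhs => rw [w]
      conv_rhs => rw [w]
      norm_num
      interval_cases i <;> norm_num
    by_cases hodd : n % 2 = 1
    · conv_lhs => rw [w]
      conv_rhs => rw [w]
      simp only [dif_neg hlt, if_neg h2, if_neg h4, if_pos hodd]
      have : (n - 1 - i) % 2 = i % 2 := by omega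
      rw [this]
    · have hm : 3 ≤ n / 2 := by omega
      conv_lhs => rw [w]
      conv_rhs => rw [w]
      simp only [dif_neg hlt, if_neg h2, if_neg h4, if_neg hodd]
      set m := n / 2 with hmdef
      have hkey : (n - 1 - i) % m = m - 1 - i % m := by
        rcases lt_or_ge i m with h | h
        · rw [Nat.mod_eq_of_lt h, show n - 1 - i = m + (m - 1 - i) by omega,
            Nat.add_mod_left, Nat.mod_eq_of_lt (by omega)]
        · rw [Nat.mod_eq_sub_mod h, Nat.mod_eq_of_lt (by omega),
            Nat.mod_eq_of_lt (by omega)]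
          omega
      rw [hkey]
      exact ih m (by omega) (by omega) (i % m) (Nat.mod_lt _ (by omega))
section RankLemmas
variable {n : ℕ} (S : Finset (Fin n))

lemma rank_lt {i : Fin n} (hi : i ∈ S) :
    (S.filter (fun j => j < i)).card < S.card := by
  refine Finset.card_lt_card ?_
  rw [Finset.ssubset_iff_of_subset (Finset.filter_subset _ _)]
  exact ⟨i, hi, by simp⟩

lemma rank_strictMono {i j : Fin n} (hi : i ∈ S) (hij : i < j) :
    (S.filter (fun k => k < i)).card < (S.filter (fun k => k < j)).card := by
  refine Finset.card_lt_card ?_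
  have hsub : S.filter (fun k => k < i) ⊆ S.filter (fun k => k < j) := by
    intro k hk
    simp only [Finset.mem_filter] at hk ⊢
    exact ⟨hk.1, lt_trans hk.2 hij⟩
  rw [Finset.ssubset_iff_of_subset hsub]
  exact ⟨i, by simp [hi, hij], by simp⟩

lemma rank_inj {i j : Fin n} (hi : i ∈ S) (hj : j ∈ S)
    (h : (S.filter (fun k => k < i)).card = (S.filter (fun k => k < j)).card) : i = j := by
  rcases lt_trichotomy i j with hlt | he | hlt
  · exact absurd h (Nat.ne_of_lt (rank_strictMono S hi hlt))
  · exact he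
  · exact absurd h.symm (Nat.ne_of_lt (rank_strictMono S hj hlt))

lemma rank_rev (hS : ∀ i, i ∈ S → i.rev ∈ S) {i : Fin n} (hi : i ∈ S) :
    (S.filter (fun j => j < i.rev)).card = S.card - 1 - (S.filter (fun j => j < i)).card := by
  have hmem : ∀ j : Fin n, j ∈ S ↔ j.rev ∈ S := by
    intro j
    exact ⟨hS j, fun h => by simpa using hS _ h⟩
  have himg : S.filter (fun j => j < i.rev) = (S.filter (fun j => i < j)).image Fin.rev := by
    ext j
    simp only [Finset.mem_image, Finset.mem_filter]
    constructor
    · rintro ⟨hjS, hj⟩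
      refine ⟨j.rev, ⟨(hmem j).1 hjS, ?_⟩, by simp⟩
      · have := Fin.rev_lt_rev.mpr hj
        simpa using this
    · rintro ⟨k, ⟨hkS, hk⟩, rfl⟩
      exact ⟨(hmem k).1 hkS, by simpa using Fin.rev_lt_rev.mpr hk⟩
  have hcard : (S.filter (fun j => i < j)).card = S.card - 1 - (S.filter (fun j => j < i)).card := by
    have hsplit := Finset.card_filter_add_card_filter_not (s := S)
      (p := fun j => j < i)
    have hins : S.filter (fun j => ¬ j < i) = insert i (S.filter (fun j => i < j)) := by
      ext j
      simp only [Finset.mem_filter, Finset.mem_insert, not_lt]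
      constructor
      · rintro ⟨hjS, hj⟩
        rcases eq_or_lt_of_le hj with h | h
        · exact Or.inl h.symm
        · exact Or.inr ⟨hjS, h⟩
      · rintro (rfl | ⟨hjS, hj⟩)
        · exact ⟨hi, le_refl _⟩
        · exact ⟨hjS, le_of_lt hj⟩
    have hni : i ∉ S.filter (fun j => i < j) := by simp
    rw [hins, Finset.card_insert_of_notMem hni] at hsplit
    omega
  rw [himg, Finset.card_image_of_injective _ Fin.rev_injective, hcard]

end RankLemmas
section Invariants
variable {n : ℕ}

def Pal (u : Fin n → ℤ) : Prop := ∀ i, u i.rev = u i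
def APal (u : Fin n → ℤ) : Prop := ∀ i, u i.rev = -u i

def QQ (u : Fin n → ℤ) : Prop :=
  Pal u ∨ (APal u ∧ (posIdx u).card < 2 ∧ (negIdx u).card < 2)

def TwoV (u : Fin n → ℤ) : Prop :=
  (∀ i j, 0 < u i → 0 < u j → u i = u j) ∧ (∀ i j, u i < 0 → u j < 0 → u i = u j)

lemma QQ.sym {u : Fin n → ℤ} (h : QQ u) {i : Fin n} (hi : u i ≠ 0) : u i.rev ≠ 0 := by
  rcases h with h | ⟨h, -⟩
  · rw [h]; exact hi
  · rw [h]; simpa using hi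

lemma mem_posIdx {u : Fin n → ℤ} {i : Fin n} : i ∈ posIdx u ↔ 0 < u i := by
  simp [posIdx]

lemma mem_negIdx {u : Fin n → ℤ} {i : Fin n} : i ∈ negIdx u ↔ u i < 0 := by
  simp [negIdx]

lemma rightChild_eq_leftChild_neg (u : Fin n → ℤ) :
    rightChild u = leftChild (fun i => -u i) := by
  have hpos : posIdx (fun i => -u i) = negIdx u := by
    ext i; simp [posIdx, negIdx]
  funext i
  simp only [rightChild, leftChild, hpos]
  congr 1
  simp

lemma posIdx_neg (u : Fin n → ℤ) : posIdx (fun i => -u i) = negIdx u := by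
  ext i; simp [posIdx, negIdx]

lemma negIdx_neg (u : Fin n → ℤ) : negIdx (fun i => -u i) = posIdx u := by
  ext i; simp [posIdx, negIdx]

lemma QQ.neg {u : Fin n → ℤ} (h : QQ u) : QQ (fun i => -u i) := by
  rcases h with h | ⟨h, h1, h2⟩
  · exact Or.inl (fun i => by simp [h i])
  · exact Or.inr ⟨fun i => by simp [h i], by rw [posIdx_neg]; exact h2,
      by rw [negIdx_neg]; exact h1⟩

lemma TwoV_leftChild (u : Fin n → ℤ) : TwoV (leftChild u) := by
  by_cases h2 : 2 ≤ (posIdx u).card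
  · obtain ⟨p, q, hp, hq, h⟩ := wvals _ h2
    constructor
    · intro i j hi hj
      simp only [leftChild] at hi hj ⊢
      split at hi
      · split at hj
        · rcases h (((posIdx u).filter (fun k => k < i)).card) with h' | h' <;>
            rcases h (((posIdx u).filter (fun k => k < j)).card) with h'' | h'' <;>
            simp_all <;> omega
        · simp at hj
      · simp at hi
    · intro i j hi hj
      simp only [leftChild] at hi hj ⊢
      split at hi
      · split at hj
        · rcases h (((posIdx u).filter (fun k => k < i)).card) with h' | h' <;>
            rcases h (((posIdx u).filter (fun k => k < j)).card) with h'' | h'' <;>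
            simp_all <;> omega
        · simp at hj
      · simp at hi
  · have hz : ∀ i, leftChild u i = 0 := by
      intro i
      simp only [leftChild]
      split
      · have : (posIdx u).card < 2 := by omega
        interval_cases h : (posIdx u).card <;>
          · rw [w]; simp
      · rfl
    exact ⟨fun i j hi => by rw [hz i] at hi; omega, fun i j hi => by rw [hz i] at hi; omega⟩

lemma TwoV_rightChild (u : Fin n → ℤ) : TwoV (rightChild u) := by
  rw [rightChild_eq_leftChild_neg]; exact TwoV_leftChild _
end Invariants
section QQchild
variable {n : ℕ}

lemma posIdx_rev {u : Fin n → ℤ} (hu : Pal u) : ∀ i, i ∈ posIdx u → i.rev ∈ posIdx u := by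
  intro i hi
  rw [mem_posIdx] at hi ⊢
  rw [hu i]; exact hi

lemma QQ_leftChild {u : Fin n → ℤ} (hu : Pal u) (h2 : 2 ≤ (posIdx u).card) :
    QQ (leftChild u) := by
  have hS : ∀ i, i ∈ posIdx u → i.rev ∈ posIdx u := posIdx_rev hu
  have hrev : ∀ i : Fin n, 0 < u i → 0 < u i.rev := by
    intro i hi; rw [hu i]; exact hi
  have hrank : ∀ i : Fin n, 0 < u i →
      ((posIdx u).filter (fun j => j < i.rev)).card =
        (posIdx u).card - 1 - ((posIdx u).filter (fun j => j < i)).card :=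
    fun i hi => rank_rev _ hS (mem_posIdx.mpr hi)
  by_cases ha : (posIdx u).card = 2
  · -- skew case
    refine Or.inr ⟨?_, ?_, ?_⟩
    · intro i
      by_cases hi : 0 < u i
      · have hi' := hrev i hi
        simp only [leftChild, if_pos hi, if_pos hi']
        rw [hrank i hi, ha]
        have hr : ((posIdx u).filter (fun j => j < i)).card < 2 := by
          rw [← ha]; exact rank_lt _ (mem_posIdx.mpr hi)
        have : ((posIdx u).filter (fun j => j < i)).card = 0 ∨
            ((posIdx u).filter (fun j => j < i)).card = 1 := by omega
        rcases this with h | h <;> rw [h] <;> simp [w2_0, w2_1]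
      · have hi' : ¬ 0 < u i.rev := by rw [hu i]; exact hi
        simp only [leftChild, if_neg hi, if_neg hi', neg_zero]
    · have h1 : (posIdx (leftChild u)).card ≤ 1 := by
        rw [Finset.card_le_one]
        intro i hi j hj
        rw [mem_posIdx] at hi hj
        simp only [leftChild] at hi hj
        by_cases hui : 0 < u i; swap; · simp [hui] at hi
        by_cases huj : 0 < u j; swap; · simp [huj] at hj
        rw [if_pos hui, ha] at hi
        rw [if_pos huj, ha] at hj
        have hri : ((posIdx u).filter (fun k => k < i)).card < 2 := by
          rw [← ha]; exact rank_lt _ (mem_posIdx.mpr hui)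
        have hrj : ((posIdx u).filter (fun k => k < j)).card < 2 := by
          rw [← ha]; exact rank_lt _ (mem_posIdx.mpr huj)
        have hi0 : ((posIdx u).filter (fun k => k < i)).card = 0 := by
          by_contra h
          have : ((posIdx u).filter (fun k => k < i)).card = 1 := by omega
          rw [this, w2_1] at hi; omega
        have hj0 : ((posIdx u).filter (fun k => k < j)).card = 0 := by
          by_contra h
          have : ((posIdx u).filter (fun k => k < j)).card = 1 := by omega
          rw [this, w2_1] at hj; omega
        exact rank_inj _ (mem_posIdx.mpr hui) (mem_posIdx.mpr huj) (hi0.trans hj0.symm)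
      omega
    · have h1 : (negIdx (leftChild u)).card ≤ 1 := by
        rw [Finset.card_le_one]
        intro i hi j hj
        rw [mem_negIdx] at hi hj
        simp only [leftChild] at hi hj
        by_cases hui : 0 < u i; swap; · simp [hui] at hi
        by_cases huj : 0 < u j; swap; · simp [huj] at hj
        rw [if_pos hui, ha] at hi
        rw [if_pos huj, ha] at hj
        have hri : ((posIdx u).filter (fun k => k < i)).card < 2 := by
          rw [← ha]; exact rank_lt _ (mem_posIdx.mpr hui)
        have hrj : ((posIdx u).filter (fun k => k < j)).card < 2 := by
          rw [← ha]; exact rank_lt _ (mem_posIdx.mpr huj)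
        have hi0 : ((posIdx u).filter (fun k => k < i)).card = 1 := by
          by_contra h
          have : ((posIdx u).filter (fun k => k < i)).card = 0 := by omega
          rw [this, w2_0] at hi; omega
        have hj0 : ((posIdx u).filter (fun k => k < j)).card = 1 := by
          by_contra h
          have : ((posIdx u).filter (fun k => k < j)).card = 0 := by omega
          rw [this, w2_0] at hj; omega
        exact rank_inj _ (mem_posIdx.mpr hui) (mem_posIdx.mpr huj) (hi0.trans hj0.symm)
      omega
  · -- palindrome case
    refine Or.inl ?_
    intro i
    by_cases hi : 0 < u i
    · have hi' := hrev i hi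
      simp only [leftChild, if_pos hi, if_pos hi']
      rw [hrank i hi]
      exact wpal _ ha _ (rank_lt _ (mem_posIdx.mpr hi))
    · have hi' : ¬ 0 < u i.rev := by rw [hu i]; exact hi
      simp only [leftChild, if_neg hi, if_neg hi']

lemma Pal.neg {u : Fin n → ℤ} (hu : Pal u) : Pal (fun i => -u i) :=
  fun i => by simp [hu i]

lemma QQ_rightChild {u : Fin n → ℤ} (hu : Pal u) (h2 : 2 ≤ (negIdx u).card) :
    QQ (rightChild u) := by
  rw [rightChild_eq_leftChild_neg]
  exact QQ_leftChild hu.neg (by rw [posIdx_neg]; exact h2)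

end QQchild
section Tree
variable {n : ℕ}

lemma mem_build_zero {u v : Fin n → ℤ} (h : v ∈ labels (build n 0 u)) : v = u := by
  simp [build, labels] at h
  exact h

lemma mem_build_succ {f : ℕ} {u v : Fin n → ℤ} (h : v ∈ labels (build n (f + 1) u)) :
    v = u ∨ (2 ≤ (posIdx u).card ∧ v ∈ labels (build n f (leftChild u))) ∨
      (2 ≤ (negIdx u).card ∧ v ∈ labels (build n f (rightChild u))) := by
  by_cases hL : 2 ≤ (posIdx u).card <;> by_cases hR : 2 ≤ (negIdx u).card <;>
    simp only [build, if_pos, if_neg, hL, hR, if_true, if_false, labels] at h <;>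
    simp only [List.mem_cons, List.mem_append, List.mem_singleton] at h <;>
    tauto

lemma supp_leftChild {u : Fin n → ℤ} {i : Fin n} (h : leftChild u i ≠ 0) : 0 < u i := by
  by_contra h'
  simp [leftChild, h'] at h

lemma supp_rightChild {u : Fin n → ℤ} {i : Fin n} (h : rightChild u i ≠ 0) : u i < 0 := by
  by_contra h'
  simp [rightChild, h'] at h

lemma supp_build : ∀ (f : ℕ) (u v : Fin n → ℤ), v ∈ labels (build n f u) →
    ∀ i, v i ≠ 0 → u i ≠ 0 := by
  intro f
  induction f with
  | zero => intro u v h i hi; rw [mem_build_zero h] at hi; exact hi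
  | succ f ih =>
    intro u v h i hi
    rcases mem_build_succ h with rfl | ⟨-, h⟩ | ⟨-, h⟩
    · exact hi
    · exact ne_of_gt (supp_leftChild (ih _ _ h i hi))
    · exact ne_of_lt (supp_rightChild (ih _ _ h i hi))

lemma QQ_build : ∀ (f : ℕ) (u v : Fin n → ℤ), QQ u → v ∈ labels (build n f u) → QQ v := by
  intro f
  induction f with
  | zero => intro u v hu h; rw [mem_build_zero h]; exact hu
  | succ f ih =>
    intro u v hu h
    rcases mem_build_succ h with rfl | ⟨hc, h⟩ | ⟨hc, h⟩
    · exact hu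
    · rcases hu with hp | ⟨-, hcard, -⟩
      · exact ih _ _ (QQ_leftChild hp hc) h
      · omega
    · rcases hu with hp | ⟨-, -, hcard⟩
      · exact ih _ _ (QQ_rightChild hp hc) h
      · omega

/-- The dichotomy for two distinct labels. -/
lemma good_build : ∀ (f : ℕ) (u : Fin n → ℤ), TwoV u → ∀ v₁ v₂ : Fin n → ℤ,
    v₁ ∈ labels (build n f u) → v₂ ∈ labels (build n f u) → v₁ ≠ v₂ →
    (∀ i, v₁ i = 0 ∨ v₂ i = 0) ∨ (∃ c, ∀ i, v₂ i ≠ 0 → v₁ i = c) ∨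
      (∃ c, ∀ i, v₁ i ≠ 0 → v₂ i = c) := by
  intro f
  induction f with
  | zero =>
    intro u hu v₁ v₂ h1 h2 hne
    exact absurd ((mem_build_zero h1).trans (mem_build_zero h2).symm) hne
  | succ f ih =>
    intro u hu v₁ v₂ h1 h2 hne
    have const_on_pos : ∀ v : Fin n → ℤ, (∀ i, v i ≠ 0 → 0 < u i) →
        ∃ c, ∀ i, v i ≠ 0 → u i = c := by
      intro v hv
      by_cases he : ∃ i, v i ≠ 0
      · obtain ⟨i₀, hi₀⟩ := he
        exact ⟨u i₀, fun i hi => hu.1 i i₀ (hv i hi) (hv i₀ hi₀)⟩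
      · push_neg at he
        exact ⟨0, fun i hi => absurd (he i) hi⟩
    have const_on_neg : ∀ v : Fin n → ℤ, (∀ i, v i ≠ 0 → u i < 0) →
        ∃ c, ∀ i, v i ≠ 0 → u i = c := by
      intro v hv
      by_cases he : ∃ i, v i ≠ 0
      · obtain ⟨i₀, hi₀⟩ := he
        exact ⟨u i₀, fun i hi => hu.2 i i₀ (hv i hi) (hv i₀ hi₀)⟩
      · push_neg at he
        exact ⟨0, fun i hi => absurd (he i) hi⟩
    rcases mem_build_succ h1 with rfl | ⟨hc1, h1'⟩ | ⟨hc1, h1'⟩ <;>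
      rcases mem_build_succ h2 with rfl | ⟨hc2, h2'⟩ | ⟨hc2, h2'⟩
    · exact absurd rfl hne
    · -- v₁ = u, v₂ in left subtree
      refine Or.inr (Or.inl ?_)
      exact const_on_pos v₂ (fun i hi => supp_leftChild (supp_build f _ _ h2' i hi))
    · refine Or.inr (Or.inl ?_)
      exact const_on_neg v₂ (fun i hi => supp_rightChild (supp_build f _ _ h2' i hi))
    · refine Or.inr (Or.inr ?_)
      exact const_on_pos v₁ (fun i hi => supp_leftChild (supp_build f _ _ h1' i hi))
    · exact ih _ (TwoV_leftChild u) _ _ h1' h2' hne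
    · -- left vs right: disjoint supports
      refine Or.inl (fun i => ?_)
      by_contra hcon
      push_neg at hcon
      have hp := supp_leftChild (supp_build f _ _ h1' i hcon.1)
      have hq := supp_rightChild (supp_build f _ _ h2' i hcon.2)
      omega
    · refine Or.inr (Or.inr ?_)
      exact const_on_neg v₁ (fun i hi => supp_rightChild (supp_build f _ _ h1' i hi))
    · refine Or.inl (fun i => ?_)
      by_contra hcon
      push_neg at hcon
      have hp := supp_rightChild (supp_build f _ _ h1' i hcon.1)
      have hq := supp_leftChild (supp_build f _ _ h2' i hcon.2)
      omega
    · exact ih _ (TwoV_rightChild u) _ _ h1' h2' hne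

end Tree
section Root
variable {n : ℕ}

lemma TwoV_root (hn : 2 ≤ n) : TwoV (fun i : Fin n => w n i) := by
  obtain ⟨p, q, hp, hq, h⟩ := wvals n hn
  constructor
  · intro i j hi hj
    rcases h i.val with h' | h' <;> rcases h j.val with h'' | h'' <;> simp_all <;> omega
  · intro i j hi hj
    rcases h i.val with h' | h' <;> rcases h j.val with h'' | h'' <;> simp_all <;> omega

lemma QQ_root (hn : 2 ≤ n) : QQ (fun i : Fin n => w n i) := by
  by_cases h2 : n = 2
  · subst h2
    refine Or.inr ⟨?_, ?_, ?_⟩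
    · intro i
      have hrv : (Fin.rev i : Fin 2).val = 1 - i.val := by
        rw [Fin.val_rev]; omega
      have : i.val = 0 ∨ i.val = 1 := by omega
      rcases this with h | h <;> simp only [hrv, h] <;> norm_num <;>
        rw [w2_0, w2_1] <;> norm_num
    · have : (posIdx (fun i : Fin 2 => w 2 i)).card ≤ 1 := by
        rw [Finset.card_le_one]
        intro i hi j hj
        rw [mem_posIdx] at hi hj
        have h1 : ∀ k : Fin 2, 0 < w 2 k.val → k.val = 0 := by
          intro k hk
          by_contra h
          have : k.val = 1 := by omega
          rw [this, w2_1] at hk; omega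
        exact Fin.ext ((h1 i hi).trans (h1 j hj).symm)
      omega
    · have : (negIdx (fun i : Fin 2 => w 2 i)).card ≤ 1 := by
        rw [Finset.card_le_one]
        intro i hi j hj
        rw [mem_negIdx] at hi hj
        have h1 : ∀ k : Fin 2, w 2 k.val < 0 → k.val = 1 := by
          intro k hk
          by_contra h
          have : k.val = 0 := by omega
          rw [this, w2_0] at hk; omega
        exact Fin.ext ((h1 i hi).trans (h1 j hj).symm)
      omega
  · refine Or.inl (fun i => ?_)
    have : (Fin.rev i).val = n - 1 - i.val := by rw [Fin.val_rev]; omega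
    simp only [this]
    exact wpal n h2 i.val i.isLt

lemma sum_rev (v : Fin n → ℤ) : ∑ i : Fin n, v i.rev = ∑ i : Fin n, v i :=
  Fintype.sum_bijective Fin.rev Fin.rev_bijective _ _ (fun _ => rfl)

end Root
/-- For distinct elements `u ≠ v` of `U(n)` (the vertex labels of `T_n`), each
with entry sum zero, the outer product `u v` has main diagonal sum and main
anti-diagonal sum both equal to zero. -/
theorem stmt13 (n : ℕ) (hn : 2 ≤ n) (u v : Fin n → ℤ)
    (hu : u ∈ labels (T n)) (hv : v ∈ labels (T n))
    (husum : ∑ i : Fin n, u i = 0) (hvsum : ∑ i : Fin n, v i = 0)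
    (huv : u ≠ v) :
    ∑ i : Fin n, u i * v i = 0 ∧ ∑ i : Fin n, u i * v i.rev = 0 := by
  have hQu : QQ u := QQ_build n (fun i => w n i) u (QQ_root hn) hu
  have hQv : QQ v := QQ_build n (fun i => w n i) v (QQ_root hn) hv
  rcases good_build n (fun i => w n i) (TwoV_root hn) u v hu hv huv with
    D | ⟨c, hc⟩ | ⟨c, hc⟩
  · constructor
    · exact Finset.sum_eq_zero (fun i _ => by rcases D i with h | h <;> simp [h])
    · refine Finset.sum_eq_zero (fun i _ => ?_)
      have : u i = 0 ∨ v i.rev = 0 := by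
        by_contra hcon
        push_neg at hcon
        have hv' : v i ≠ 0 := by
          have := hQv.sym (i := i.rev) hcon.2
          simpa using this
        rcases D i with h | h
        · exact hcon.1 h
        · exact hv' h
      rcases this with h | h <;> simp [h]
  · -- u constant c on supp v
    constructor
    · have : ∑ i : Fin n, u i * v i = ∑ i : Fin n, c * v i := by
        refine Finset.sum_congr rfl (fun i _ => ?_)
        by_cases hvi : v i = 0
        · simp [hvi]
        · rw [hc i hvi]
      rw [this, ← Finset.mul_sum, hvsum, mul_zero]
    · have : ∑ i : Fin n, u i * v i.rev = ∑ i : Fin n, c * v i.rev := by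
        refine Finset.sum_congr rfl (fun i _ => ?_)
        by_cases hvi : v i.rev = 0
        · simp [hvi]
        · have hv' : v i ≠ 0 := by
            have := hQv.sym (i := i.rev) hvi
            simpa using this
          rw [hc i hv']
      rw [this, ← Finset.mul_sum, sum_rev, hvsum, mul_zero]
  · -- v constant c on supp u
    constructor
    · have : ∑ i : Fin n, u i * v i = ∑ i : Fin n, u i * c := by
        refine Finset.sum_congr rfl (fun i _ => ?_)
        by_cases hui : u i = 0
        · simp [hui]
        · rw [hc i hui]
      rw [this, ← Finset.sum_mul, husum, zero_mul]
    · have : ∑ i : Fin n, u i * v i.rev = ∑ i : Fin n, u i * c := by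
        refine Finset.sum_congr rfl (fun i _ => ?_)
        by_cases hui : u i = 0
        · simp [hui]
        · rw [hc i.rev (hQu.sym hui)]
      rw [this, ← Finset.sum_mul, husum, zero_mul]
end

section
/- The subspace Sud_{n²} of V_{n²,n²} of n²×n² matrices with all row sums and column sums zero and with each of the n² aligned n×n block submatrices summing to zero has dimension n⁴ - (2n² - 1) - (n-1)² = n(n-1)²(n+2). -/
open Finset

/-- The Sudoku subspace: real `n² × n²` matrices (with rows and columns indexed
by `Fin n × Fin n`, the pair `(a, r)` standing for index `a*n + r`) whose row
sums, column sums, and all `n²` aligned `n × n` block sums vanish. -/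
def Sud (n : ℕ) : Submodule ℝ (Matrix (Fin n × Fin n) (Fin n × Fin n) ℝ) where
  carrier := {A | (∀ i, ∑ j, A i j = 0) ∧ (∀ j, ∑ i, A i j = 0) ∧
    (∀ a b : Fin n, ∑ r : Fin n, ∑ c : Fin n, A (a, r) (b, c) = 0)}
  zero_mem' := by simp
  add_mem' := by
    rintro A B ⟨hA1, hA2, hA3⟩ ⟨hB1, hB2, hB3⟩
    refine ⟨fun i => ?_, fun j => ?_, fun a b => ?_⟩ <;>
      simp [Matrix.add_apply, Finset.sum_add_distrib, hA1, hA2, hA3, hB1, hB2, hB3]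
  smul_mem' := by
    rintro c A ⟨hA1, hA2, hA3⟩
    refine ⟨fun i => ?_, fun j => ?_, fun a b => ?_⟩ <;>
      simp [Matrix.smul_apply, ← Finset.mul_sum, hA1, hA2, hA3]

namespace SudAux

/-- Index type for rows/columns of our big matrices. -/
abbrev Idx (m : ℕ) := Fin (m + 1) × Fin (m + 1)

/-- The distinguished (last) column index. -/
def j0 (m : ℕ) : Idx m := (Fin.last m, Fin.last m)

/-- The target of the constraint map: all row sums, all column sums except the one
at `j0`, and all block sums for blocks not in the last band/stack. -/
abbrev W (m : ℕ) :=
  (Idx m → ℝ) × ({j : Idx m // j ≠ j0 m} → ℝ) × (Fin m × Fin m → ℝ)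

/-- The constraint map. -/
def phi (m : ℕ) : Matrix (Idx m) (Idx m) ℝ →ₗ[ℝ] W m where
  toFun A := (fun i => ∑ j, A i j,
              fun j => ∑ i, A i (j : Idx m),
              fun p => ∑ r, ∑ c, A (p.1.castSucc, r) (p.2.castSucc, c))
  map_add' A B := by
    refine Prod.ext ?_ (Prod.ext ?_ ?_) <;> funext x <;>
      simp [Finset.sum_add_distrib]
  map_smul' t A := by
    refine Prod.ext ?_ (Prod.ext ?_ ?_) <;> funext x <;>
      simp [Finset.mul_sum]

lemma sud_eq_ker (m : ℕ) : Sud (m + 1) = LinearMap.ker (phi m) := by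
  ext A
  simp only [Sud, Submodule.mem_mk, AddSubmonoid.mem_mk, AddSubsemigroup.mem_mk,
    Set.mem_setOf_eq, LinearMap.mem_ker, phi, LinearMap.coe_mk, AddHom.coe_mk,
    Prod.ext_iff, funext_iff, Prod.fst_zero, Prod.snd_zero, Pi.zero_apply]
  constructor
  · rintro ⟨hA1, hA2, hA3⟩
    exact ⟨hA1, fun j => hA2 j.1, fun p => hA3 _ _⟩
  · rintro ⟨h1, h2, h3⟩
    -- recover all column sums
    have hc_ne : ∀ j, j ≠ j0 m → ∑ i, A i j = 0 := fun j hj => h2 ⟨j, hj⟩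
    have htot : ∑ j, ∑ i, A i j = 0 := by
      rw [Finset.sum_comm]
      exact Finset.sum_eq_zero fun i _ => h1 i
    have hc0 : ∑ i, A i (j0 m) = 0 := by
      have hsplit := Finset.add_sum_erase Finset.univ (fun j => ∑ i, A i j)
        (Finset.mem_univ (j0 m))
      have hrest : ∑ j ∈ Finset.univ.erase (j0 m), ∑ i, A i j = 0 :=
        Finset.sum_eq_zero fun j hj => hc_ne j (Finset.ne_of_mem_erase hj)
      rw [hrest, htot] at hsplit
      linarith
    have hc : ∀ j, ∑ i, A i j = 0 := by
      intro j
      by_cases hj : j = j0 m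
      · rw [hj]; exact hc0
      · exact hc_ne j hj
    -- block sums
    have h3' : ∀ (a b : Fin m),
        (∑ r, ∑ c, A (a.castSucc, r) (b.castSucc, c)) = 0 := fun a b => h3 (a, b)
    set S : Fin (m + 1) → Fin (m + 1) → ℝ :=
      fun a b => ∑ r, ∑ c, A (a, r) (b, c) with hS
    have hrow : ∀ a, ∑ b, S a b = 0 := by
      intro a
      have h : ∑ b, S a b = ∑ r, ∑ j : Idx m, A (a, r) j := by
        rw [Finset.sum_comm]
        exact Finset.sum_congr rfl fun r _ =>
          (Fintype.sum_prod_type (f := fun j : Idx m => A (a, r) j)).symm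
      rw [h]
      exact Finset.sum_eq_zero fun r _ => h1 (a, r)
    have hcol : ∀ b, ∑ a, S a b = 0 := by
      intro b
      have h : ∑ a, S a b = ∑ c, ∑ i : Idx m, A i (b, c) := by
        show (∑ a, ∑ r, ∑ c, A (a, r) (b, c)) = _
        rw [show (∑ a, ∑ r, ∑ c, A (a, r) (b, c) : ℝ)
              = ∑ a, ∑ c, ∑ r, A (a, r) (b, c) from
            Finset.sum_congr rfl fun a _ => Finset.sum_comm,
          Finset.sum_comm]
        exact Finset.sum_congr rfl fun c _ =>
          (Fintype.sum_prod_type (f := fun i : Idx m => A i (b, c))).symm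
      rw [h]
      exact Finset.sum_eq_zero fun c _ => hc (b, c)
    have key1 : ∀ (a : Fin m) (b : Fin (m + 1)), S a.castSucc b = 0 := by
      intro a
      have hl : S a.castSucc (Fin.last m) = 0 := by
        have h0 := hrow a.castSucc
        rw [Fin.sum_univ_castSucc] at h0
        have hz : ∑ b : Fin m, S a.castSucc b.castSucc = 0 :=
          Finset.sum_eq_zero fun b _ => h3' a b
        rw [hz] at h0
        linarith
      exact fun b => Fin.lastCases hl (fun b => h3' a b) b
    refine ⟨h1, hc, fun a b => ?_⟩
    show S a b = 0
    refine Fin.lastCases ?_ (fun a' => key1 a' b) a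
    have h0 := hcol b
    rw [Fin.sum_univ_castSucc] at h0
    have hz : ∑ a : Fin m, S a.castSucc b = 0 :=
      Finset.sum_eq_zero fun a _ => key1 a b
    rw [hz] at h0
    linarith

lemma rows_mem (m : ℕ) (r : Idx m → ℝ) :
    ((r, 0, 0) : W m) ∈ LinearMap.range (phi m) := by
  classical
  refine ⟨Matrix.of fun i j => if j = j0 m then r i else 0, ?_⟩
  refine Prod.ext ?_ (Prod.ext ?_ ?_) <;> funext x
  · simp [phi]
  · simp [phi, if_neg x.2]
  · have hne : ∀ c : Fin (m + 1), (x.2.castSucc, c) ≠ j0 m := by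
      intro c h
      exact (Fin.castSucc_lt_last x.2).ne (congrArg Prod.fst h)
    simp [phi, hne]

lemma cols_mem (m : ℕ) (c : {j : Idx m // j ≠ j0 m} → ℝ) :
    ((0, c, 0) : W m) ∈ LinearMap.range (phi m) := by
  classical
  set i0 : Idx m := (Fin.last m, 0) with hi0
  set g : Idx m → ℝ :=
    fun j => if h : j = j0 m then -(∑ j' : {j : Idx m // j ≠ j0 m}, c j') else c ⟨j, h⟩
    with hg
  refine ⟨Matrix.of fun i j => if i = i0 then g j else 0, ?_⟩
  refine Prod.ext ?_ (Prod.ext ?_ ?_) <;> funext x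
  · -- row sums vanish
    show (∑ j, if x = i0 then g j else 0) = 0
    by_cases hx : x = i0
    · simp only [hx, if_true]
      have hsplit := Finset.add_sum_erase Finset.univ g (Finset.mem_univ (j0 m))
      have hrest : ∑ j ∈ Finset.univ.erase (j0 m), g j
          = ∑ j' : {j : Idx m // j ≠ j0 m}, c j' := by
        rw [Finset.sum_subtype (p := fun j => j ≠ j0 m) (Finset.univ.erase (j0 m)) (by simp) g]
        refine Finset.sum_congr rfl fun j _ => ?_
        rw [hg]
        simp only [dif_neg j.2]
      have hj0 : g (j0 m) = -(∑ j' : {j : Idx m // j ≠ j0 m}, c j') := by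
        rw [hg]; simp
      rw [hrest, hj0] at hsplit
      rw [← hsplit]
      ring
    · simp [hx]
  · -- tracked column sums
    show (∑ i, if i = i0 then g x.1 else 0) = c x
    rw [Finset.sum_ite_eq' Finset.univ i0 (fun _ => g x.1)]
    simp only [Finset.mem_univ, if_true, hg, dif_neg x.2]
  · -- tracked block sums vanish
    have hne : ∀ ρ : Fin (m + 1), ((x.1.castSucc, ρ) : Idx m) ≠ i0 := by
      intro ρ h
      exact (Fin.castSucc_lt_last x.1).ne (congrArg Prod.fst h)
    simp [phi, hne]

lemma single_block_mem (m : ℕ) (p : Fin m × Fin m) :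
    ((0, 0, Pi.single p 1) : W m) ∈ LinearMap.range (phi m) := by
  classical
  set e : Idx m → ℝ :=
    fun q => (if q = (p.1.castSucc, (0 : Fin (m + 1))) then 1 else 0)
      - (if q = ((Fin.last m : Fin (m + 1)), (0 : Fin (m + 1))) then 1 else 0) with he
  set f : Idx m → ℝ :=
    fun q => (if q = (p.2.castSucc, (0 : Fin (m + 1))) then 1 else 0)
      - (if q = ((Fin.last m : Fin (m + 1)), (0 : Fin (m + 1))) then 1 else 0) with hf
  have hesum : ∑ q, e q = 0 := by simp [he, Finset.sum_sub_distrib]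
  have hfsum : ∑ q, f q = 0 := by simp [hf, Finset.sum_sub_distrib]
  have heband : ∀ a : Fin m, ∑ ρ, e (a.castSucc, ρ) = if a = p.1 then 1 else 0 := by
    intro a
    have h1 : ∀ ρ : Fin (m + 1),
        ((a.castSucc, ρ) : Idx m) = (p.1.castSucc, 0) ↔ (a = p.1 ∧ ρ = 0) := by
      intro ρ
      simp [Prod.ext_iff, Fin.castSucc_inj]
    have h2 : ∀ ρ : Fin (m + 1),
        ((a.castSucc, ρ) : Idx m) ≠ ((Fin.last m : Fin (m + 1)), 0) := by
      intro ρ h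
      exact (Fin.castSucc_lt_last a).ne (congrArg Prod.fst h)
    simp only [he, h2, if_false, sub_zero]
    by_cases hap : a = p.1
    · simp [h1, hap]
    · simp [h1, hap]
  have hfband : ∀ b : Fin m, ∑ γ, f (b.castSucc, γ) = if b = p.2 then 1 else 0 := by
    intro b
    have h1 : ∀ γ : Fin (m + 1),
        ((b.castSucc, γ) : Idx m) = (p.2.castSucc, 0) ↔ (b = p.2 ∧ γ = 0) := by
      intro γ
      simp [Prod.ext_iff, Fin.castSucc_inj]
    have h2 : ∀ γ : Fin (m + 1),
        ((b.castSucc, γ) : Idx m) ≠ ((Fin.last m : Fin (m + 1)), 0) := by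
      intro γ h
      exact (Fin.castSucc_lt_last b).ne (congrArg Prod.fst h)
    simp only [hf, h2, if_false, sub_zero]
    by_cases hbp : b = p.2
    · simp [h1, hbp]
    · simp [h1, hbp]
  refine ⟨Matrix.of fun i j => e i * f j, ?_⟩
  refine Prod.ext ?_ (Prod.ext ?_ ?_) <;> funext x
  · show (∑ j, e x * f j) = 0
    rw [← Finset.mul_sum, hfsum, mul_zero]
  · show (∑ i, e i * f x.1) = 0
    rw [← Finset.sum_mul, hesum, zero_mul]
  · show (∑ ρ, ∑ γ, e (x.1.castSucc, ρ) * f (x.2.castSucc, γ)) = (Pi.single p 1 : Fin m × Fin m → ℝ) x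
    have : (∑ ρ, ∑ γ, e (x.1.castSucc, ρ) * f (x.2.castSucc, γ))
        = (∑ ρ, e (x.1.castSucc, ρ)) * (∑ γ, f (x.2.castSucc, γ)) := by
      rw [Finset.sum_mul]
      exact Finset.sum_congr rfl fun ρ _ => (Finset.mul_sum _ _ _).symm
    rw [this, heband, hfband, Pi.single_apply]
    by_cases hx : x = p
    · simp [hx]
    · have : ¬(x.1 = p.1 ∧ x.2 = p.2) := by
        intro ⟨ha, hb⟩; exact hx (Prod.ext ha hb)
      by_cases h1 : x.1 = p.1
      · have h2 : x.2 ≠ p.2 := fun h => this ⟨h1, h⟩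
        simp [h1, h2, hx]
      · simp [h1, hx]

lemma blocks_mem (m : ℕ) (s : Fin m × Fin m → ℝ) :
    ((0, 0, s) : W m) ∈ LinearMap.range (phi m) := by
  have hrepr : ((0, 0, s) : W m) = ∑ p, s p • ((0, 0, Pi.single p 1) : W m) := by
    refine Prod.ext ?_ (Prod.ext ?_ ?_)
    · simp [Prod.fst_sum]
    · simp [Prod.snd_sum, Prod.fst_sum]
    · simp only [Prod.snd_sum, Prod.smul_mk, smul_zero]
      funext q
      rw [Finset.sum_apply]
      simp only [Pi.smul_apply, Pi.single_apply, smul_eq_mul, mul_ite, mul_one, mul_zero]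
      simp [Finset.sum_ite_eq]
  rw [hrepr]
  exact Submodule.sum_mem _ fun p _ =>
    Submodule.smul_mem _ _ (single_block_mem m p)

lemma phi_surj (m : ℕ) : LinearMap.range (phi m) = ⊤ := by
  rw [Submodule.eq_top_iff']
  rintro ⟨r, c, s⟩
  have h : ((r, c, s) : W m) = (r, 0, 0) + (0, c, 0) + (0, 0, s) := by
    simp [Prod.ext_iff]
  rw [h]
  exact add_mem (add_mem (rows_mem m r) (cols_mem m c)) (blocks_mem m s)

end SudAux

theorem stmt15 (n : ℕ) (hn : 1 ≤ n) :
    Module.finrank ℝ (Sud n) = n ^ 4 - (2 * n ^ 2 - 1) - (n - 1) ^ 2 ∧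
    Module.finrank ℝ (Sud n) = n * (n - 1) ^ 2 * (n + 2) := by
  obtain ⟨m, rfl⟩ : ∃ m, n = m + 1 := ⟨n - 1, by omega⟩
  have hrk := LinearMap.finrank_range_add_finrank_ker (SudAux.phi m)
  rw [SudAux.phi_surj m, finrank_top] at hrk
  have hM : Module.finrank ℝ (Matrix (SudAux.Idx m) (SudAux.Idx m) ℝ)
      = ((m + 1) * (m + 1)) * ((m + 1) * (m + 1)) := by
    rw [Module.finrank_matrix]
    simp [Fintype.card_prod]
  have hcard : Fintype.card {j : SudAux.Idx m // j ≠ SudAux.j0 m}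
      = m * m + 2 * m := by
    have h1 : Fintype.card {j : SudAux.Idx m // ¬ j = SudAux.j0 m}
        = Fintype.card (SudAux.Idx m) - Fintype.card {j : SudAux.Idx m // j = SudAux.j0 m} := by
      exact Fintype.card_subtype_compl _
    have h2 : Fintype.card {j : SudAux.Idx m // j = SudAux.j0 m} = 1 :=
      Fintype.card_subtype_eq _
    have h3 : Fintype.card (SudAux.Idx m) = (m + 1) * (m + 1) := by
      simp [Fintype.card_prod]
    have h4 : (m + 1) * (m + 1) = (m * m + 2 * m) + 1 := by ring
    rw [h1, h2, h3, h4, Nat.add_sub_cancel]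
  have hW : Module.finrank ℝ (SudAux.W m)
      = ((m + 1) * (m + 1) + (m * m + 2 * m)) + m * m := by
    rw [Module.finrank_prod, Module.finrank_prod, Module.finrank_fintype_fun_eq_card,
      Module.finrank_fintype_fun_eq_card, Module.finrank_fintype_fun_eq_card,
      hcard]
    simp [Fintype.card_prod, Nat.add_assoc]
  rw [hW, hM] at hrk
  have hs : Module.finrank ℝ (Sud (m + 1))
      = Module.finrank ℝ (LinearMap.ker (SudAux.phi m)) := by
    rw [SudAux.sud_eq_ker]
  have key : Module.finrank ℝ (Sud (m + 1)) = (m + 1) * m ^ 2 * (m + 3) := by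
    have P : (((m + 1) * (m + 1) + (m * m + 2 * m)) + m * m) + (m + 1) * m ^ 2 * (m + 3)
        = ((m + 1) * (m + 1)) * ((m + 1) * (m + 1)) := by ring
    rw [hs]
    exact Nat.add_left_cancel (hrk.trans P.symm)
  have hm1 : m + 1 - 1 = m := by omega
  constructor
  · rw [hm1]
    have h2 : 2 * (m + 1) ^ 2 - 1 = 2 * m ^ 2 + 4 * m + 1 := by
      rw [show 2 * (m + 1) ^ 2 = (2 * m ^ 2 + 4 * m + 1) + 1 by ring, Nat.add_sub_cancel]
    rw [h2,
      show (m + 1) ^ 4 = (((m + 1) * m ^ 2 * (m + 3) + m ^ 2) + (2 * m ^ 2 + 4 * m + 1)) by ring,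
      Nat.add_sub_cancel, Nat.add_sub_cancel]
    exact key
  · rw [hm1, key]
end
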